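/- arXiv:1209.0784 — 2 statements merged into one kernel-verified Lean document; each statement's English description precedes it below -/
import Mathlib

section
/- Let $K_0 > 0$ and suppose $y = (y_1, y_2): [0,T) \to \mathbb{R}^2$ is a solution of $y_1' = \frac{y_2}{1-y_1} + b_1(t)$, $y_2' = y_1 + y_2 + b_2(t)$ with $|b_1(t)| \leq K_0$ and $|b_2(t)| \leq K_0$ a.e., such that $1 - \frac{1}{2K_0} < y_1(t) < 1$ and $y_2(t) > K_0 + \frac{1}{K_0} - 1$ for all $t \in [0,T)$ and $y_1(0) = y_1^0$. Then $y_1$ is nondecreasing on $[0,T)$ and $y_1(t) \geq 1 - \sqrt{(y_1^0 - 1)^2 - t}$ for all $t \in [0, \min\{T, (y_1^0-1)^2\})$; in particular if $y_1(t) \to 1$ as $t \to T$ then $T \leq (y_1^0 - 1)^2$. -/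
/-!
Since $K_0 + 1/K_0 - 1 \ge 1$, the bounds on $y_1, y_2, b_1$ give $y_1' \ge \frac{1}{2(1 - y_1)} > 0$,
so $y_1$ is nondecreasing and $(y_1 - 1)^2 + t$ is nonincreasing. Hence
$(y_1(t) - 1)^2 + t \le (y_1^0 - 1)^2$, i.e. $y_1$ lies above the explicit subsolution
$1 - \sqrt{(y_1^0 - 1)^2 - t}$, and the solution cannot survive past $t = (y_1^0 - 1)^2$.
-/

open Set

lemma monotoneOn_of_forall_hasDerivAt_nonneg {D : Set ℝ} (hD : Convex ℝ D) {f f' : ℝ → ℝ}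
    (hf : ∀ x ∈ D, HasDerivAt f (f' x) x) (hf' : ∀ x ∈ D, 0 ≤ f' x) : MonotoneOn f D :=
  monotoneOn_of_hasDerivWithinAt_nonneg hD (fun x hx ↦ (hf x hx).continuousAt.continuousWithinAt)
    (fun x hx ↦ (hf x (interior_subset hx)).hasDerivWithinAt) fun x hx ↦ hf' x (interior_subset hx)

lemma antitoneOn_of_forall_hasDerivAt_nonpos {D : Set ℝ} (hD : Convex ℝ D) {f f' : ℝ → ℝ}
    (hf : ∀ x ∈ D, HasDerivAt f (f' x) x) (hf' : ∀ x ∈ D, f' x ≤ 0) : AntitoneOn f D :=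
  antitoneOn_of_hasDerivWithinAt_nonpos hD (fun x hx ↦ (hf x hx).continuousAt.continuousWithinAt)
    (fun x hx ↦ (hf x (interior_subset hx)).hasDerivWithinAt) fun x hx ↦ hf' x (interior_subset hx)

lemma one_le_add_one_div_sub_one {K : ℝ} (hK : 0 < K) : 1 ≤ K + 1 / K - 1 := by
  have h : K + 1 / K - 2 = (K - 1) ^ 2 / K := by field_simp; ring
  linarith [h ▸ (by positivity : 0 ≤ (K - 1) ^ 2 / K)]

lemma one_div_two_mul_le_div_add {K e y b : ℝ} (hK : 0 < K) (he : 0 < e)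
    (heK : e < 1 / (2 * K)) (hy : 1 ≤ y) (hb : -K ≤ b) : 1 / (2 * e) ≤ y / e + b := by
  have hKe : K * e < 1 / 2 := by
    rw [lt_div_iff₀ (by positivity)] at heK
    linarith
  rw [div_add' _ _ _ he.ne', div_le_div_iff₀ (by positivity) he]
  nlinarith [mul_le_mul_of_nonneg_right hb he.le]

/-- Comparison with the subsolution `1 - √(c - t)` of `y' = 1 / (2 (1 - y))`. -/
lemma antitoneOn_sub_one_sq_add {D : Set ℝ} (hD : Convex ℝ D) {y y' : ℝ → ℝ}
    (hy : ∀ t ∈ D, HasDerivAt y (y' t) t) (hlt : ∀ t ∈ D, y t < 1)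
    (hy' : ∀ t ∈ D, 1 / (2 * (1 - y t)) ≤ y' t) :
    AntitoneOn (fun t ↦ (y t - 1) ^ 2 + t) D := by
  refine antitoneOn_of_forall_hasDerivAt_nonpos hD
    (fun t ht ↦ (((hy t ht).sub_const 1).pow 2).add (hasDerivAt_id t)) fun t ht ↦ ?_
  have hpos : 0 < 1 - y t := sub_pos.2 (hlt t ht)
  have h := mul_le_mul_of_nonneg_left (hy' t ht) (by positivity : (0 : ℝ) ≤ 2 * (1 - y t))
  rw [mul_one_div_cancel (by positivity)] at h
  simp only [Nat.cast_ofNat, Nat.add_one_sub_one, pow_one]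
  linarith

theorem stmt9_general (K0 T y10 : ℝ) (hK0 : 0 < K0) (hT : 0 < T)
    (y1 y2 b1 : ℝ → ℝ)
    (hb1 : ∀ t ∈ Set.Ico (0:ℝ) T, |b1 t| ≤ K0)
    (hderiv1 : ∀ t ∈ Set.Ico (0:ℝ) T, HasDerivAt y1 (y2 t / (1 - y1 t) + b1 t) t)
    (hbnd1 : ∀ t ∈ Set.Ico (0:ℝ) T, 1 - 1 / (2 * K0) < y1 t ∧ y1 t < 1)
    (hbnd2 : ∀ t ∈ Set.Ico (0:ℝ) T, K0 + 1 / K0 - 1 < y2 t)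
    (h0 : y1 0 = y10) :
    (∀ s ∈ Set.Ico (0:ℝ) T, ∀ t ∈ Set.Ico (0:ℝ) T, s ≤ t → y1 s ≤ y1 t) ∧
    (∀ t ∈ Set.Ico (0:ℝ) (min T ((y10 - 1)^2)),
      y1 t ≥ 1 - Real.sqrt ((y10 - 1)^2 - t)) ∧
    (Filter.Tendsto y1 (nhdsWithin T (Set.Iio T)) (nhds 1) → T ≤ (y10 - 1)^2) := by
  have hlt (t) (ht : t ∈ Ico 0 T) : y1 t < 1 := (hbnd1 t ht).2
  have hy1' (t) (ht : t ∈ Ico 0 T) : 1 / (2 * (1 - y1 t)) ≤ y2 t / (1 - y1 t) + b1 t :=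
    one_div_two_mul_le_div_add hK0 (by linarith [hlt t ht]) (by linarith [(hbnd1 t ht).1])
      ((one_le_add_one_div_sub_one hK0).trans (hbnd2 t ht).le) (neg_le_of_abs_le (hb1 t ht))
  have hmono : MonotoneOn y1 (Ico 0 T) :=
    monotoneOn_of_forall_hasDerivAt_nonneg (convex_Ico 0 T) hderiv1 fun t ht ↦
      (one_div_pos.2 (by linarith [hlt t ht])).le.trans (hy1' t ht)
  have hbound (t) (ht : t ∈ Ico 0 T) : (y1 t - 1) ^ 2 + t ≤ (y10 - 1) ^ 2 := by
    simpa [h0] using antitoneOn_sub_one_sq_add (convex_Ico 0 T) hderiv1 hlt hy1' ⟨le_rfl, hT⟩ ht ht.1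
  refine ⟨fun s hs t ht hst ↦ hmono hs ht hst, fun t ht ↦ ?_, fun _ ↦ ?_⟩
  · have ht' : t ∈ Ico 0 T := ⟨ht.1, ht.2.trans_le (min_le_left _ _)⟩
    have h := Real.le_sqrt_of_sq_le (x := 1 - y1 t) (y := (y10 - 1) ^ 2 - t)
      (by rw [sub_sq_comm]; linarith [hbound t ht'])
    linarith
  · by_contra! hc
    have hc' : (y10 - 1) ^ 2 ∈ Ico 0 T := ⟨sq_nonneg _, hc⟩
    nlinarith [hbound _ hc', pow_pos (sub_pos.2 (hlt _ hc')) 2]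

theorem stmt9 (K0 T y10 : ℝ) (hK0 : 0 < K0) (hT : 0 < T)
    (y1 y2 b1 b2 : ℝ → ℝ)
    (hb1 : ∀ t ∈ Set.Ico (0:ℝ) T, |b1 t| ≤ K0)
    (hb2 : ∀ t ∈ Set.Ico (0:ℝ) T, |b2 t| ≤ K0)
    (hderiv1 : ∀ t ∈ Set.Ico (0:ℝ) T, HasDerivAt y1 (y2 t / (1 - y1 t) + b1 t) t)
    (hderiv2 : ∀ t ∈ Set.Ico (0:ℝ) T, HasDerivAt y2 (y1 t + y2 t + b2 t) t)
    (hbnd1 : ∀ t ∈ Set.Ico (0:ℝ) T, 1 - 1 / (2 * K0) < y1 t ∧ y1 t < 1)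
    (hbnd2 : ∀ t ∈ Set.Ico (0:ℝ) T, K0 + 1 / K0 - 1 < y2 t)
    (h0 : y1 0 = y10) :
    (∀ s ∈ Set.Ico (0:ℝ) T, ∀ t ∈ Set.Ico (0:ℝ) T, s ≤ t → y1 s ≤ y1 t) ∧
    (∀ t ∈ Set.Ico (0:ℝ) (min T ((y10 - 1)^2)),
      y1 t ≥ 1 - Real.sqrt ((y10 - 1)^2 - t)) ∧
    (Filter.Tendsto y1 (nhdsWithin T (Set.Iio T)) (nhds 1) → T ≤ (y10 - 1)^2) :=
  stmt9_general K0 T y10 hK0 hT y1 y2 b1 hb1 hderiv1 hbnd1 hbnd2 h0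
end

section
/- Under the hypotheses of the coupled system above (i.e., $y_1' = \frac{1}{1-y_2} + b_1$, $y_2' = \frac{1}{1-y_1} + b_2$ with $|b_i| \leq K_0$, values of $y_1, y_2$ in $(1 - \frac{1}{2K_0}, 1)$, $T \leq \frac{1}{4K_0^2}$, and the integral bounds $\int_0^t \frac{d\tau}{1-y_i(\tau)} \leq \frac{3}{4K_0}$ for $i=1,2$), it holds for every $t \in [0,T)$ that $\frac{1 - y_2(t)}{1 - y_1(t)} \leq \frac{1 - y_2(0)}{1 - y_1(0)}\, e^{3/2}$ and $\frac{1 - y_1(t)}{1 - y_2(t)} \leq \frac{1 - y_1(0)}{1 - y_2(0)}\, e^{3/2}$. -/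
/-!
With `p = 1 - y₁` and `q = 1 - y₂` the coupling terms cancel in the logarithmic derivative of
`q / p`: `(log q - log p)' = b₁ / p - b₂ / q ≤ K₀ (1 / p + 1 / q)`. Integrating from `0` to `t`
and using the two integral bounds gives `log (q / p)` growing by at most `3 / 2`.
-/

open Set MeasureTheory intervalIntegral Real

theorem hasDerivAt_log_one_sub_sub_log_one_sub {y₁ y₂ : ℝ → ℝ} {b₁ b₂ x : ℝ}
    (hy₁ : y₁ x < 1) (hy₂ : y₂ x < 1)
    (h₁ : HasDerivAt y₁ (1 / (1 - y₂ x) + b₁) x) (h₂ : HasDerivAt y₂ (1 / (1 - y₁ x) + b₂) x) :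
    HasDerivAt (fun u ↦ log (1 - y₂ u) - log (1 - y₁ u))
      (b₁ / (1 - y₁ x) - b₂ / (1 - y₂ x)) x := by
  have hp : 1 - y₁ x ≠ 0 := (sub_pos.2 hy₁).ne'
  have hq : 1 - y₂ x ≠ 0 := (sub_pos.2 hy₂).ne'
  refine (((h₂.const_sub 1).log hq).sub ((h₁.const_sub 1).log hp)).congr_deriv ?_
  field_simp
  ring

theorem div_sub_div_le_mul_inv_add_mul_inv {b₁ b₂ p q K : ℝ} (hp : 0 < p) (hq : 0 < q)
    (hb₁ : |b₁| ≤ K) (hb₂ : |b₂| ≤ K) : b₁ / p - b₂ / q ≤ K * p⁻¹ + K * q⁻¹ := by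
  rw [sub_eq_add_neg, ← neg_div, div_eq_mul_inv, div_eq_mul_inv]
  gcongr
  · exact (le_abs_self _).trans hb₁
  · exact (neg_le_abs _).trans hb₂

theorem log_one_sub_sub_log_one_sub_le_integral {y₁ y₂ b₁ b₂ : ℝ → ℝ} {K a b : ℝ} (hab : a ≤ b)
    (hb₁ : ∀ x ∈ Icc a b, |b₁ x| ≤ K) (hb₂ : ∀ x ∈ Icc a b, |b₂ x| ≤ K)
    (hy₁ : ∀ x ∈ Icc a b, y₁ x < 1) (hy₂ : ∀ x ∈ Icc a b, y₂ x < 1)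
    (h₁ : ∀ x ∈ Icc a b, HasDerivAt y₁ (1 / (1 - y₂ x) + b₁ x) x)
    (h₂ : ∀ x ∈ Icc a b, HasDerivAt y₂ (1 / (1 - y₁ x) + b₂ x) x) :
    (log (1 - y₂ b) - log (1 - y₁ b)) - (log (1 - y₂ a) - log (1 - y₁ a)) ≤
      K * (∫ x in a..b, (1 - y₁ x)⁻¹) + K * ∫ x in a..b, (1 - y₂ x)⁻¹ := by
  have hp : ∀ x ∈ Icc a b, 1 - y₁ x ≠ 0 := fun x hx ↦ (sub_pos.2 (hy₁ x hx)).ne'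
  have hq : ∀ x ∈ Icc a b, 1 - y₂ x ≠ 0 := fun x hx ↦ (sub_pos.2 (hy₂ x hx)).ne'
  have hp_cont : ContinuousOn (fun x ↦ 1 - y₁ x) (Icc a b) :=
    continuousOn_const.sub <| continuousOn_of_forall_continuousAt fun x hx ↦
      (h₁ x hx).continuousAt
  have hq_cont : ContinuousOn (fun x ↦ 1 - y₂ x) (Icc a b) :=
    continuousOn_const.sub <| continuousOn_of_forall_continuousAt fun x hx ↦
      (h₂ x hx).continuousAt
  have hp_int : IntervalIntegrable (fun x ↦ (1 - y₁ x)⁻¹) volume a b :=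
    (hp_cont.inv₀ hp).intervalIntegrable_of_Icc hab
  have hq_int : IntervalIntegrable (fun x ↦ (1 - y₂ x)⁻¹) volume a b :=
    (hq_cont.inv₀ hq).intervalIntegrable_of_Icc hab
  rw [← intervalIntegral.integral_const_mul, ← intervalIntegral.integral_const_mul,
    ← intervalIntegral.integral_add (hp_int.const_mul K) (hq_int.const_mul K)]
  refine sub_le_integral_of_hasDeriv_right_of_le
    (g' := fun x ↦ b₁ x / (1 - y₁ x) - b₂ x / (1 - y₂ x)) hab
    ((hq_cont.log hq).sub (hp_cont.log hp)) (fun x hx ↦ ?_)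
    ((intervalIntegrable_iff_integrableOn_Icc_of_le hab).1
      ((hp_int.const_mul K).add (hq_int.const_mul K))) fun x hx ↦ ?_
  · replace hx := Ioo_subset_Icc_self hx
    exact (hasDerivAt_log_one_sub_sub_log_one_sub (hy₁ x hx) (hy₂ x hx) (h₁ x hx)
      (h₂ x hx)).hasDerivWithinAt
  · replace hx := Ioo_subset_Icc_self hx
    exact div_sub_div_le_mul_inv_add_mul_inv (sub_pos.2 (hy₁ x hx)) (sub_pos.2 (hy₂ x hx))
      (hb₁ x hx) (hb₂ x hx)

theorem div_le_div_mul_exp_of_log_sub_le {p q p₀ q₀ c : ℝ} (hp : 0 < p) (hq : 0 < q)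
    (hp₀ : 0 < p₀) (hq₀ : 0 < q₀) (h : (log q - log p) - (log q₀ - log p₀) ≤ c) :
    q / p ≤ q₀ / p₀ * exp c := by
  rw [← exp_log (div_pos hq hp), ← exp_log (div_pos hq₀ hp₀), ← exp_add, exp_le_exp,
    log_div hq.ne' hp.ne', log_div hq₀.ne' hp₀.ne']
  linarith

theorem one_sub_div_one_sub_le_mul_exp {y₁ y₂ b₁ b₂ : ℝ → ℝ} {K t : ℝ} (hK : 0 < K) (ht : 0 ≤ t)
    (hb₁ : ∀ x ∈ Icc 0 t, |b₁ x| ≤ K) (hb₂ : ∀ x ∈ Icc 0 t, |b₂ x| ≤ K)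
    (hy₁ : ∀ x ∈ Icc 0 t, y₁ x < 1) (hy₂ : ∀ x ∈ Icc 0 t, y₂ x < 1)
    (h₁ : ∀ x ∈ Icc 0 t, HasDerivAt y₁ (1 / (1 - y₂ x) + b₁ x) x)
    (h₂ : ∀ x ∈ Icc 0 t, HasDerivAt y₂ (1 / (1 - y₁ x) + b₂ x) x)
    (hI₁ : (∫ x in (0 : ℝ)..t, (1 - y₁ x)⁻¹) ≤ 3 / (4 * K))
    (hI₂ : (∫ x in (0 : ℝ)..t, (1 - y₂ x)⁻¹) ≤ 3 / (4 * K)) :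
    (1 - y₂ t) / (1 - y₁ t) ≤ (1 - y₂ 0) / (1 - y₁ 0) * exp (3 / 2) := by
  have h0 : (0 : ℝ) ∈ Icc 0 t := left_mem_Icc.2 ht
  have ht' : t ∈ Icc 0 t := right_mem_Icc.2 ht
  refine div_le_div_mul_exp_of_log_sub_le (sub_pos.2 (hy₁ t ht')) (sub_pos.2 (hy₂ t ht'))
    (sub_pos.2 (hy₁ 0 h0)) (sub_pos.2 (hy₂ 0 h0)) ?_
  calc _ ≤ K * (∫ x in (0 : ℝ)..t, (1 - y₁ x)⁻¹) + K * ∫ x in (0 : ℝ)..t, (1 - y₂ x)⁻¹ :=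
        log_one_sub_sub_log_one_sub_le_integral ht hb₁ hb₂ hy₁ hy₂ h₁ h₂
    _ ≤ K * (3 / (4 * K)) + K * (3 / (4 * K)) := by gcongr
    _ = 3 / 2 := by field_simp; norm_num

theorem stmt14_general (K0 T : ℝ) (hK0 : 0 < K0)
    (y1 y2 b1 b2 : ℝ → ℝ)
    (hb1 : ∀ t ∈ Set.Ico (0:ℝ) T, |b1 t| ≤ K0)
    (hb2 : ∀ t ∈ Set.Ico (0:ℝ) T, |b2 t| ≤ K0)
    (hbnd1 : ∀ t ∈ Set.Ico (0:ℝ) T, 1 - 1 / (2 * K0) < y1 t ∧ y1 t < 1)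
    (hbnd2 : ∀ t ∈ Set.Ico (0:ℝ) T, 1 - 1 / (2 * K0) < y2 t ∧ y2 t < 1)
    (hderiv1 : ∀ t ∈ Set.Ico (0:ℝ) T, HasDerivAt y1 (1 / (1 - y2 t) + b1 t) t)
    (hderiv2 : ∀ t ∈ Set.Ico (0:ℝ) T, HasDerivAt y2 (1 / (1 - y1 t) + b2 t) t)
    (hint1 : ∀ t ∈ Set.Ico (0:ℝ) T, (∫ τ in (0:ℝ)..t, (1 - y1 τ)⁻¹) ≤ 3 / (4 * K0))
    (hint2 : ∀ t ∈ Set.Ico (0:ℝ) T, (∫ τ in (0:ℝ)..t, (1 - y2 τ)⁻¹) ≤ 3 / (4 * K0)) :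
    ∀ t ∈ Set.Ico (0:ℝ) T,
      (1 - y2 t) / (1 - y1 t) ≤ (1 - y2 0) / (1 - y1 0) * Real.exp (3/2) ∧
      (1 - y1 t) / (1 - y2 t) ≤ (1 - y1 0) / (1 - y2 0) * Real.exp (3/2) := by
  intro t ht
  have hsub : Icc 0 t ⊆ Ico 0 T := Icc_subset_Ico_right ht.2
  have hy1 : ∀ x ∈ Icc 0 t, y1 x < 1 := fun x hx ↦ (hbnd1 x (hsub hx)).2
  have hy2 : ∀ x ∈ Icc 0 t, y2 x < 1 := fun x hx ↦ (hbnd2 x (hsub hx)).2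
  exact ⟨one_sub_div_one_sub_le_mul_exp hK0 ht.1 (fun x hx ↦ hb1 x (hsub hx))
      (fun x hx ↦ hb2 x (hsub hx)) hy1 hy2 (fun x hx ↦ hderiv1 x (hsub hx))
      (fun x hx ↦ hderiv2 x (hsub hx)) (hint1 t ht) (hint2 t ht),
    one_sub_div_one_sub_le_mul_exp hK0 ht.1 (fun x hx ↦ hb2 x (hsub hx))
      (fun x hx ↦ hb1 x (hsub hx)) hy2 hy1 (fun x hx ↦ hderiv2 x (hsub hx))
      (fun x hx ↦ hderiv1 x (hsub hx)) (hint2 t ht) (hint1 t ht)⟩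

theorem stmt14 (K0 T : ℝ) (hK0 : 0 < K0) (hT : 0 < T) (hT' : T ≤ 1 / (4 * K0^2))
    (y1 y2 b1 b2 : ℝ → ℝ)
    (hb1 : ∀ t ∈ Set.Ico (0:ℝ) T, |b1 t| ≤ K0)
    (hb2 : ∀ t ∈ Set.Ico (0:ℝ) T, |b2 t| ≤ K0)
    (hbnd1 : ∀ t ∈ Set.Ico (0:ℝ) T, 1 - 1 / (2 * K0) < y1 t ∧ y1 t < 1)
    (hbnd2 : ∀ t ∈ Set.Ico (0:ℝ) T, 1 - 1 / (2 * K0) < y2 t ∧ y2 t < 1)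
    (hderiv1 : ∀ t ∈ Set.Ico (0:ℝ) T, HasDerivAt y1 (1 / (1 - y2 t) + b1 t) t)
    (hderiv2 : ∀ t ∈ Set.Ico (0:ℝ) T, HasDerivAt y2 (1 / (1 - y1 t) + b2 t) t)
    (hint1 : ∀ t ∈ Set.Ico (0:ℝ) T, (∫ τ in (0:ℝ)..t, (1 - y1 τ)⁻¹) ≤ 3 / (4 * K0))
    (hint2 : ∀ t ∈ Set.Ico (0:ℝ) T, (∫ τ in (0:ℝ)..t, (1 - y2 τ)⁻¹) ≤ 3 / (4 * K0)) :
    ∀ t ∈ Set.Ico (0:ℝ) T,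
      (1 - y2 t) / (1 - y1 t) ≤ (1 - y2 0) / (1 - y1 0) * Real.exp (3/2) ∧
      (1 - y1 t) / (1 - y2 t) ≤ (1 - y1 0) / (1 - y2 0) * Real.exp (3/2) :=
  stmt14_general K0 T hK0 y1 y2 b1 b2 hb1 hb2 hbnd1 hbnd2 hderiv1 hderiv2 hint1 hint2
end
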